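/- Let F be the free group on two generators a and b, let T = {b} ∪ {aᵏ : k ∈ ℤ, k ≠ 0}, and let φ be the automorphism of F with φ(a) = b and φ(b) = a. Then φ is not a quasi-isometry of (F,d_T): for every L ≥ 1 and C ≥ 0 there exist u,v ∈ F with d_T(φ(u),φ(v)) > L·d_T(u,v) + C. -/

import Mathlib

/-!
With `T = {b} ∪ {aᵏ : k ≠ 0}`, every power `aⁿ` lies at `d_T`-distance at most `1` from the
identity, while its image `φ(aⁿ) = bⁿ` lies at distance at least `n`: the exponent sum in `b`
is a homomorphism to `ℤ` taking values in `{-1, 0, 1}` on `T ∪ T⁻¹`, so it is bounded by word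
length, and it equals `n` on `bⁿ`.
-/

/-- Word metric on a group `G` associated to a (generating) set `S`:
`wordDist S a b` is the least `n` such that `a⁻¹ * b` is a product of `n`
elements of `S ∪ S⁻¹`. -/
noncomputable def wordDist {G : Type*} [Group G] (S : Set G) (a b : G) : ℕ :=
  sInf {n : ℕ | ∃ l : List G, (∀ x ∈ l, x ∈ S ∨ x⁻¹ ∈ S) ∧ l.length = n ∧ l.prod = a⁻¹ * b}

/-- `q` is an `(L,C)`-quasi-isometric embedding with respect to the
distance functions `dX` and `dY`. -/
def IsQIEmb {X Y : Type*} (L C : ℝ) (dX : X → X → ℝ) (dY : Y → Y → ℝ) (q : X → Y) : Prop :=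
  ∀ a b, dX a b / L - C ≤ dY (q a) (q b) ∧ dY (q a) (q b) ≤ L * dX a b + C

/-- `q` is an `(L,C)`-quasi-isometry: an `(L,C)`-quasi-isometric embedding whose image is
`C`-dense. -/
def IsQI {X Y : Type*} (L C : ℝ) (dX : X → X → ℝ) (dY : Y → Y → ℝ) (q : X → Y) : Prop :=
  IsQIEmb L C dX dY q ∧ ∀ y, ∃ x, dY y (q x) ≤ C

open Multiplicative

section WordDist

variable {G : Type*} [Group G] {S : Set G} {a b : G}

lemma wordDist_le_length {l : List G} (hl : ∀ x ∈ l, x ∈ S ∨ x⁻¹ ∈ S)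
    (hprod : l.prod = a⁻¹ * b) : wordDist S a b ≤ l.length :=
  Nat.sInf_le ⟨l, hl, rfl, hprod⟩

lemma wordDist_le_one_of_mem (h : a⁻¹ * b ∈ S) : wordDist S a b ≤ 1 :=
  wordDist_le_length (l := [a⁻¹ * b]) (by simp [h]) (by simp)

lemma exists_list_length_eq_wordDist (h : a⁻¹ * b ∈ Subgroup.closure S) :
    ∃ l : List G, (∀ x ∈ l, x ∈ S ∨ x⁻¹ ∈ S) ∧ l.length = wordDist S a b ∧
      l.prod = a⁻¹ * b := by
  rw [← Subgroup.mem_toSubmonoid, Subgroup.closure_toSubmonoid] at h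
  obtain ⟨l, hl, hprod⟩ := Submonoid.exists_list_of_mem_closure h
  have hne : {n : ℕ | ∃ l : List G, (∀ x ∈ l, x ∈ S ∨ x⁻¹ ∈ S) ∧ l.length = n ∧
      l.prod = a⁻¹ * b}.Nonempty := ⟨l.length, l, hl, rfl, hprod⟩
  exact Nat.sInf_mem hne

lemma abs_toAdd_prod_le_length (f : G →* Multiplicative ℤ)
    (hf : ∀ x ∈ S, |toAdd (f x)| ≤ 1) {l : List G} (hl : ∀ x ∈ l, x ∈ S ∨ x⁻¹ ∈ S) :
    |toAdd (f l.prod)| ≤ l.length := by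
  induction l with
  | nil => simp
  | cons x t ih =>
    have hx : |toAdd (f x)| ≤ 1 := by
      rcases hl x (by simp) with hx | hx
      · exact hf x hx
      · simpa using hf _ hx
    have ht := ih fun y hy => hl y (by simp [hy])
    simp only [List.prod_cons, map_mul, toAdd_mul, List.length_cons, Nat.cast_succ]
    linarith [abs_add_le (toAdd (f x)) (toAdd (f t.prod))]

lemma abs_toAdd_le_wordDist (f : G →* Multiplicative ℤ) (hf : ∀ x ∈ S, |toAdd (f x)| ≤ 1)
    (h : a⁻¹ * b ∈ Subgroup.closure S) : |toAdd (f (a⁻¹ * b))| ≤ wordDist S a b := by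
  obtain ⟨l, hl, hlen, hprod⟩ := exists_list_length_eq_wordDist h
  rw [← hlen, ← hprod]
  exact abs_toAdd_prod_le_length f hf hl

end WordDist

namespace FreeGroup

variable {α : Type*} [DecidableEq α]

noncomputable def exponentSum (i : α) : FreeGroup α →* Multiplicative ℤ :=
  lift fun j => if j = i then ofAdd 1 else 1

@[simp]
lemma exponentSum_of_self (i : α) : exponentSum i (of i) = ofAdd 1 := by
  simp [exponentSum]

@[simp]
lemma exponentSum_of_of_ne {i j : α} (h : j ≠ i) : exponentSum i (of j) = 1 := by
  simp [exponentSum, h]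

end FreeGroup

open FreeGroup

theorem stmt13_general (φ : MulAut (FreeGroup Bool))
    (hφa : φ (FreeGroup.of false) = FreeGroup.of true)
    (T : Set (FreeGroup Bool))
    (hT : T = {FreeGroup.of true} ∪ {x | ∃ k : ℤ, k ≠ 0 ∧ x = FreeGroup.of false ^ k}) :
    ∀ L C : ℝ, 1 ≤ L → 0 ≤ C → ∃ u v : FreeGroup Bool,
      (wordDist T (φ u) (φ v) : ℝ) > L * (wordDist T u v : ℝ) + C := by
  intro L C hL hC
  obtain ⟨n, hn⟩ := exists_nat_gt (L + C)
  have hn0 : (n : ℤ) ≠ 0 := by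
    rintro hn0
    rw [Int.natCast_eq_zero.mp hn0, Nat.cast_zero] at hn
    linarith
  refine ⟨1, of false ^ n, ?_⟩
  have hshort : wordDist T 1 (of false ^ n) ≤ 1 :=
    wordDist_le_one_of_mem (by rw [hT, inv_one, one_mul]; exact Or.inr ⟨n, hn0, by simp⟩)
  have hlong : (n : ℤ) ≤ wordDist T (φ 1) (φ (of false ^ n)) := by
    have hbound : ∀ x ∈ T, |toAdd (exponentSum true x)| ≤ 1 := by
      rw [hT]
      rintro x (rfl | ⟨k, -, rfl⟩) <;> simp
    have hmem : (φ 1)⁻¹ * φ (of false ^ n) ∈ Subgroup.closure T := by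
      rw [_root_.map_one, inv_one, one_mul, map_pow, hφa]
      exact pow_mem (Subgroup.subset_closure (by simp [hT])) n
    simpa [hφa] using abs_toAdd_le_wordDist (exponentSum true) hbound hmem
  have hshort' : (wordDist T 1 (of false ^ n) : ℝ) ≤ 1 := by exact_mod_cast hshort
  have hlong' : (n : ℝ) ≤ wordDist T (φ 1) (φ (of false ^ n)) := by exact_mod_cast hlong
  nlinarith

theorem stmt13 (φ : MulAut (FreeGroup Bool))
    (hφa : φ (FreeGroup.of false) = FreeGroup.of true)
    (hφb : φ (FreeGroup.of true) = FreeGroup.of false)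
    (T : Set (FreeGroup Bool))
    (hT : T = {FreeGroup.of true} ∪ {x | ∃ k : ℤ, k ≠ 0 ∧ x = FreeGroup.of false ^ k}) :
    ∀ L C : ℝ, 1 ≤ L → 0 ≤ C → ∃ u v : FreeGroup Bool,
      (wordDist T (φ u) (φ v) : ℝ) > L * (wordDist T u v : ℝ) + C :=
  stmt13_general φ hφa T hT
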